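/- Let V be a vector space over a field F and let T be an abelian regular subgroup of the affine group Aff(V). For each x in V, let τ(x) be the unique element of T sending 0 to x, and write τ(x) = γ(x)·t_x where γ(x) ∈ GL(V) and t_x is translation by x; set δ(x) = γ(x) − 1. Then x·δ(y) = y·δ(x) for all x, y ∈ V. -/
import Mathlib


theorem stmt {F V : Type*} [Field F] [AddCommGroup V] [Module F V]
    (T : Subgroup (V ≃ᵃ[F] V))
    (hcomm : ∀ g ∈ T, ∀ h ∈ T, g * h = h * g)
    (hreg : ∀ v : V, ∃! g : V ≃ᵃ[F] V, g ∈ T ∧ g 0 = v)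
    (τ : V → (V ≃ᵃ[F] V)) (hτT : ∀ x, τ x ∈ T) (hτ0 : ∀ x, τ x 0 = x)
    (δ : V → Module.End F V)
    (hδ : ∀ x z, τ x z = z + δ x z + x) :
    ∀ x y : V, δ y x = δ x y := by
  intro x y
  have h := hcomm (τ x) (hτT x) (τ y) (hτT y)
  have h0 : (τ x * τ y) 0 = (τ y * τ x) 0 := by rw [h]
  have hxy : τ x (τ y 0) = τ y (τ x 0) := h0
  rw [hτ0, hτ0, hδ, hδ] at hxy
  have := hxy
  abel_nf at this
  -- y + δ x y + x = x + δ y x + y  →  δ x y = δ y x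
  have h2 : δ x y = δ y x := by
    have := hxy
    have : y + δ x y + x - y - x = x + δ y x + y - y - x := by rw [this]
    simpa [add_sub_cancel_right, add_comm, add_left_comm, sub_eq_iff_eq_add] using this
  exact h2.symm
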